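/- The generalized Mayer–Vietoris sequence of cochain complexes 0 → C•(A) → ⊕_{α₀} C•(A_{α₀}) → ⊕_{α₀<α₁} C•(A_{α₀·α₁}) → ⋯ → ⊕_{α₀<⋯<α_p} C•(A_{α₀⋯α_p}) → ⋯ is exact at every term, where the maps are the generalized restriction homomorphisms with alternating signs. -/

import Mathlib

/-!
For a simplex `x` let `m(x)` be the least index with `x ∈ A m(x)`. Prepending `m(x)` gives a
contracting homotopy `(Kω)_{α₀⋯α_p}(x) = ω_{m(x)α₀⋯α_p}(x)` (zero when `m(x) = α₀`), and in
degree `0` the gluing map `ω ↦ (x ↦ ω_{m(x)}(x))` is a left inverse of `r`. A direct computation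
gives `δK + Kδ = id` and `r ∘ glue + Kδ = id`, so every cocycle is a coboundary.
-/

namespace Stmt7

/- Here `S` stands for the set of `q`-simplices (for some fixed degree `q`) of
the finite simplicial complex `A`, and `A i ⊆ S` for the set of `q`-simplices of
the subcomplex `A_i`, so that `C^q(A_{α₀⋯α_p})` is the space of ℚ-valued
functions on `⋂ i, A (α i)`, and `C^q(A)` that on `⋃ i, A i`. -/

variable {S : Type} {n : ℕ}

/-- Strictly increasing (p+1)-tuples α₀ < ⋯ < α_p of indices. -/
abbrev Tup (n p : ℕ) := {f : Fin (p + 1) → Fin n // StrictMono f}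

/-- An element of ⊕_{α₀<⋯<α_p} C^q(A_{α₀⋯α_p}). -/
abbrev MVElt (A : Fin n → Set S) (p : ℕ) := ∀ α : Tup n p, (↥(⋂ i, A (α.1 i)) → ℚ)

/-- The generalized restriction homomorphism with alternating signs,
(δω)_{α₀,…,α_{p+1}} = Σ_j (−1)^j ω_{α₀,…,α̂_j,…,α_{p+1}} restricted. -/
noncomputable def MVdelta (A : Fin n → Set S) (p : ℕ) (ω : MVElt A p) :
    MVElt A (p + 1) := fun α s =>
  ∑ j : Fin (p + 2), (-1 : ℚ) ^ (j : ℕ) *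
    ω ⟨α.1 ∘ j.succAbove, α.2.comp (Fin.strictMono_succAbove j)⟩
      ⟨s.1, Set.mem_iInter.2 fun i => Set.mem_iInter.1 s.2 (j.succAbove i)⟩

/-- The restriction map r : C^q(A) → ⊕_{α₀} C^q(A_{α₀}). -/
def r (A : Fin n → Set S) (φ : (↥(⋃ i, A i)) → ℚ) : MVElt A 0 :=
  fun α s => φ ⟨s.1, Set.mem_iUnion.2 ⟨α.1 0, Set.mem_iInter.1 s.2 0⟩⟩

theorem neg_one_pow_succAbove_add_predAbove {R : Type*} [Ring R] {m : ℕ}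
    (j : Fin (m + 2)) (i : Fin (m + 1)) :
    (-1 : R) ^ ((j.succAbove i : ℕ) + (i.predAbove j : ℕ)) = -(-1) ^ ((j : ℕ) + (i : ℕ)) := by
  rcases lt_or_ge i.castSucc j with h | h
  · rw [Fin.succAbove_of_castSucc_lt _ _ h, Fin.predAbove_of_castSucc_lt _ _ h,
      show (j : ℕ) + i = (i.castSucc : ℕ) + (j.pred (Fin.ne_zero_of_lt h) : ℕ) + 1 by
        simp only [Fin.val_castSucc, Fin.val_pred]; omega, pow_succ, mul_neg_one, neg_neg]
  · rw [Fin.succAbove_of_le_castSucc _ _ h, Fin.predAbove_of_le_castSucc _ _ h,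
      show (i.succ : ℕ) + (j.castPred (Fin.ne_last_of_lt (h.trans_lt i.castSucc_lt_last)) : ℕ)
        = (j : ℕ) + i + 1 by simp only [Fin.val_succ, Fin.coe_castPred]; omega,
      pow_succ, mul_neg_one]

/-- Removing positions `j` then `i` and removing `j.succAbove i` then `i.predAbove j` delete the
same two entries, with opposite signs. -/
theorem alternating_sum_removeNth_removeNth {R X : Type*} [Ring R] {m : ℕ}
    (F : (Fin m → X) → R) (v : Fin (m + 2) → X) :
    ∑ j : Fin (m + 2), (-1 : R) ^ (j : ℕ) *
      ∑ i : Fin (m + 1), (-1 : R) ^ (i : ℕ) * F (i.removeNth (j.removeNth v)) = 0 := by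
  simp only [Finset.mul_sum, ← mul_assoc, ← pow_add, ← Finset.sum_product']
  refine Finset.sum_ninvolution (fun x => (x.1.succAbove x.2, x.2.predAbove x.1))
    (fun ⟨j, i⟩ => ?_) (fun ⟨j, i⟩ _ h => j.succAbove_ne i (congrArg Prod.fst h))
    (fun _ => Finset.mem_univ _)
    (fun ⟨j, i⟩ => Prod.ext (Fin.succAbove_succAbove_predAbove j i)
      (Fin.predAbove_predAbove_succAbove j i))
  rw [neg_one_pow_succAbove_add_predAbove, ← Fin.removeNth_removeNth_eq_swap]
  simp

theorem Fin.removeNth_succ_cons {X : Type*} {m : ℕ} (k : Fin (m + 1)) (a : X)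
    (f : Fin (m + 1) → X) :
    k.succ.removeNth (Fin.cons a f : Fin (m + 2) → X) = Fin.cons a (k.removeNth f) :=
  Fin.cons_comp_succ_succAbove a f k

noncomputable def firstCover (A : Fin n → Set S) {x : S} (hx : ∃ i, x ∈ A i) : Fin n :=
  wellFounded_lt.min {i | x ∈ A i} hx

theorem mem_firstCover (A : Fin n → Set S) {x : S} (hx : ∃ i, x ∈ A i) :
    x ∈ A (firstCover A hx) :=
  wellFounded_lt.min_mem {i | x ∈ A i} hx

theorem firstCover_le (A : Fin n → Set S) {x : S} (hx : ∃ i, x ∈ A i) {i : Fin n}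
    (hi : x ∈ A i) : firstCover A hx ≤ i :=
  WellFounded.min_le _ (s := {i | x ∈ A i}) hi

/-- The value of `ω` at a tuple `f` and a simplex `x`, set to `0` unless `f` is strictly
increasing and `x` lies in every `A (f i)`. -/
noncomputable def MVElt.eval {A : Fin n → Set S} {p : ℕ} (ω : MVElt A p)
    (f : Fin (p + 1) → Fin n) (x : S) : ℚ :=
  open Classical in
  if h : StrictMono f ∧ ∀ i, x ∈ A (f i) then ω ⟨f, h.1⟩ ⟨x, Set.mem_iInter.2 h.2⟩ else 0

section eval

variable {A : Fin n → Set S} {p : ℕ}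

theorem MVElt.eval_apply (ω : MVElt A p) (α : Tup n p) (s : ↥(⋂ i, A (α.1 i))) :
    ω.eval α.1 s.1 = ω α s :=
  dif_pos ⟨α.2, Set.mem_iInter.1 s.2⟩

theorem MVElt.eval_of_not_strictMono (ω : MVElt A p) {f : Fin (p + 1) → Fin n}
    (hf : ¬StrictMono f) (x : S) : ω.eval f x = 0 :=
  dif_neg fun h => hf h.1

theorem MVElt.eval_cons_of_le (ω : MVElt A (p + 1)) {f : Fin (p + 1) → Fin n} {m : Fin n}
    (hm : f 0 ≤ m) (x : S) : ω.eval (Fin.cons m f) x = 0 :=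
  ω.eval_of_not_strictMono (fun h => ((Fin.strictMono_cons.1 h).1 0).not_ge hm) x

theorem MVElt.eval_zero (f : Fin (p + 1) → Fin n) (x : S) : (0 : MVElt A p).eval f x = 0 := by
  unfold MVElt.eval
  split_ifs <;> rfl

theorem MVdelta_apply (ω : MVElt A p) (α : Tup n (p + 1)) (s : ↥(⋂ i, A (α.1 i))) :
    MVdelta A p ω α s = ∑ j : Fin (p + 2), (-1 : ℚ) ^ (j : ℕ) * ω.eval (j.removeNth α.1) s.1 := by
  refine Finset.sum_congr rfl fun j _ => congrArg _ ?_
  exact (ω.eval_apply ⟨_, α.2.comp j.strictMono_succAbove⟩ ⟨s.1, _⟩).symm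

theorem eval_MVdelta (ω : MVElt A p) {f : Fin (p + 2) → Fin n} (hf : StrictMono f) {x : S}
    (hx : ∀ i, x ∈ A (f i)) :
    (MVdelta A p ω).eval f x = ∑ j : Fin (p + 2), (-1 : ℚ) ^ (j : ℕ) * ω.eval (j.removeNth f) x :=
  (MVElt.eval_apply _ ⟨f, hf⟩ ⟨x, Set.mem_iInter.2 hx⟩).trans (MVdelta_apply ω _ _)

theorem eval_MVdelta_cons (ω : MVElt A p) {f : Fin (p + 1) → Fin n} (hf : StrictMono f)
    {m : Fin n} (hm : m < f 0) {x : S} (hxm : x ∈ A m) (hx : ∀ i, x ∈ A (f i)) :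
    (MVdelta A p ω).eval (Fin.cons m f) x =
      ω.eval f x -
        ∑ k : Fin (p + 1), (-1 : ℚ) ^ (k : ℕ) * ω.eval (Fin.cons m (k.removeNth f)) x := by
  have hcons : StrictMono (Fin.cons m f : Fin (p + 2) → Fin n) :=
    Fin.strictMono_cons.2 ⟨fun j => hm.trans_le (hf.monotone j.zero_le), hf⟩
  rw [eval_MVdelta ω hcons (Fin.cases hxm hx), Fin.sum_univ_succ]
  simp [Fin.removeNth_succ_cons, pow_succ, sub_eq_add_neg]

theorem MVdelta_MVdelta (η : MVElt A p) : MVdelta A (p + 1) (MVdelta A p η) = 0 := by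
  funext α s
  rw [MVdelta_apply]
  have hface (j : Fin (p + 3)) := eval_MVdelta η (f := j.removeNth α.1)
    (α.2.comp j.strictMono_succAbove) (fun i => Set.mem_iInter.1 s.2 (j.succAbove i))
  simp only [hface]
  exact alternating_sum_removeNth_removeNth (fun g => η.eval g s.1) α.1

end eval

/-- The contracting homotopy `(Kω)_α(x) = ω_{(m, α)}(x)`, where `m` is the first index with
`x ∈ A m`. When `m = α 0` the tuple `(m, α)` is not strictly increasing and `eval` returns `0`. -/
noncomputable def homotopy (A : Fin n → Set S) (p : ℕ) (ω : MVElt A (p + 1)) : MVElt A p :=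
  fun α s => ω.eval (Fin.cons (firstCover A ⟨α.1 0, Set.mem_iInter.1 s.2 0⟩) α.1) s.1

noncomputable def glue (A : Fin n → Set S) (ω : MVElt A 0) : ↥(⋃ i, A i) → ℚ :=
  fun x => ω.eval ![firstCover A (Set.mem_iUnion.1 x.2)] x.1

section homotopy

variable {A : Fin n → Set S}

theorem eval_homotopy {p : ℕ} (ω : MVElt A (p + 1)) {f : Fin (p + 1) → Fin n}
    (hf : StrictMono f) {x : S} (hx : ∀ i, x ∈ A (f i)) :
    (homotopy A p ω).eval f x = ω.eval (Fin.cons (firstCover A ⟨f 0, hx 0⟩) f) x :=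
  MVElt.eval_apply _ ⟨f, hf⟩ ⟨x, Set.mem_iInter.2 hx⟩

theorem homotopy_zero (p : ℕ) : homotopy A p 0 = 0 := by
  funext α s
  exact MVElt.eval_zero _ _

theorem MVdelta_homotopy_add_homotopy_MVdelta {p : ℕ} (ω : MVElt A (p + 1)) :
    MVdelta A p (homotopy A p ω) + homotopy A (p + 1) (MVdelta A (p + 1) ω) = ω := by
  funext α s
  have hx : ∀ i, s.1 ∈ A (α.1 i) := Set.mem_iInter.1 s.2
  have hface (j : Fin (p + 2)) := eval_homotopy ω (f := j.removeNth α.1)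
    (α.2.comp j.strictMono_succAbove) (fun i => hx (j.succAbove i))
  obtain ⟨m, hmα, hxm, hm⟩ : ∃ m, m ≤ α.1 0 ∧ s.1 ∈ A m ∧ firstCover A ⟨α.1 0, hx 0⟩ = m :=
    ⟨_, firstCover_le A _ (hx 0), mem_firstCover A _, rfl⟩
  simp only [Pi.add_apply, MVdelta_apply, hface, homotopy, hm]
  rcases hmα.lt_or_eq with hlt | rfl
  · rw [eval_MVdelta_cons ω α.2 hlt hxm hx, MVElt.eval_apply]
    ring
  · have hsucc (i : Fin (p + 1)) : ω.eval (Fin.cons (α.1 0) (i.succ.removeNth α.1)) s.1 = 0 :=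
      ω.eval_cons_of_le (by simp [Fin.removeNth_apply]) _
    simp [MVElt.eval_cons_of_le, Fin.sum_univ_succ, hsucc, Fin.cons_self_tail, MVElt.eval_apply]

theorem glue_r : Function.LeftInverse (glue A) (r A) := fun φ => by
  funext x
  exact MVElt.eval_apply (r A φ) ⟨_, Subsingleton.strictMono (α := Fin 1) _⟩
    ⟨x.1, Set.mem_iInter.2 (Fin.forall_fin_one.2 (mem_firstCover A (Set.mem_iUnion.1 x.2)))⟩

theorem r_glue_add_homotopy_MVdelta (ω : MVElt A 0) :
    r A (glue A ω) + homotopy A 0 (MVdelta A 0 ω) = ω := by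
  funext α s
  have hx : ∀ i, s.1 ∈ A (α.1 i) := Set.mem_iInter.1 s.2
  obtain ⟨m, hmα, hxm, hm⟩ : ∃ m, m ≤ α.1 0 ∧ s.1 ∈ A m ∧ firstCover A ⟨α.1 0, hx 0⟩ = m :=
    ⟨_, firstCover_le A _ (hx 0), mem_firstCover A _, rfl⟩
  have hr : r A (glue A ω) α s = ω.eval ![m] s.1 := by
    simp only [r, glue, hm]
  have hcons (a : Fin n) (f : Fin 0 → Fin n) : (Fin.cons a f : Fin 1 → Fin n) = ![a] := by
    rw [Subsingleton.elim f ![]]; rfl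
  simp only [Pi.add_apply, hr, homotopy, hm]
  rcases hmα.lt_or_eq with hlt | rfl
  · rw [eval_MVdelta_cons ω α.2 hlt hxm hx, MVElt.eval_apply]
    simp [hcons]
  · rw [MVElt.eval_cons_of_le _ le_rfl, add_zero, ← hcons _ (Fin.tail α.1), Fin.cons_self_tail,
      MVElt.eval_apply]

theorem MVdelta_r (φ : ↥(⋃ i, A i) → ℚ) : MVdelta A 0 (r A φ) = 0 := by
  funext α s
  simp [MVdelta, Fin.sum_univ_two, r]

end homotopy

/-- the generalized Mayer–Vietoris sequence
0 → C^q(A) → ⊕_{α₀} C^q(A_{α₀}) → ⊕_{α₀<α₁} C^q(A_{α₀·α₁}) → ⋯ is exact at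
every term: `r` is injective, ker δ⁰ = im r, and ker δ^{p+1} = im δ^p. -/
theorem stmt_7 (A : Fin n → Set S) :
    Function.Injective (r A) ∧
      (∀ ω : MVElt A 0, MVdelta A 0 ω = (fun _ _ => 0) ↔ ∃ φ, r A φ = ω) ∧
      (∀ p : ℕ, ∀ ω : MVElt A (p + 1),
        MVdelta A (p + 1) ω = (fun _ _ => 0) ↔ ∃ η : MVElt A p, MVdelta A p η = ω) := by
  refine ⟨glue_r.injective, fun ω => ⟨fun hω => ⟨glue A ω, ?_⟩, ?_⟩,
    fun p ω => ⟨fun hω => ⟨homotopy A p ω, ?_⟩, ?_⟩⟩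
  · simpa [show MVdelta A 0 ω = 0 from hω, homotopy_zero] using r_glue_add_homotopy_MVdelta ω
  · rintro ⟨φ, rfl⟩
    exact MVdelta_r φ
  · simpa [show MVdelta A (p + 1) ω = 0 from hω, homotopy_zero] using
      MVdelta_homotopy_add_homotopy_MVdelta ω
  · rintro ⟨η, rfl⟩
    exact MVdelta_MVdelta η

end Stmt7
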